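/- arXiv:2405.10206 — 2 statements merged into one kernel-verified Lean document; each statement's English description precedes it below -/
import Mathlib

section
/- In the proportional-share mechanism (sorted costs c_1 ≤ ... ≤ c_m, budget B, winners = largest prefix k* with c_{k*} ≤ B/k*, payment p = min(B/k*, c_{k*+1}) to each winner), the payment p does not depend on the reported cost of any winner as long as that winner's report keeps her in the winning set; consequently, a winning executor who reports any cost ĉ ≤ p still wins and receives the same utility p − c, where c is her true cost. -/
/-- Order-statistic characterization: for a function monotone on `[1,m]` and a
downward-closed predicate `q`, `q (f j)` holds iff at least `j` of the values
`f 1, …, f m` satisfy `q`. -/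
lemma keyLem (m : ℕ) (f : ℕ → ℝ) (hf : MonotoneOn f (Set.Icc 1 m))
    (q : ℝ → Prop) [DecidablePred q] (hq : ∀ x y : ℝ, x ≤ y → q y → q x)
    (j : ℕ) (hj1 : 1 ≤ j) (hjm : j ≤ m) :
    q (f j) ↔ j ≤ Multiset.countP q (Multiset.map f (Finset.Icc 1 m).val) := by
  have hcount : Multiset.countP q (Multiset.map f (Finset.Icc 1 m).val)
      = ((Finset.Icc 1 m).filter (fun l => q (f l))).card := by
    rw [Multiset.countP_map]
    rfl
  rw [hcount]
  constructor
  · intro h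
    have hsub : Finset.Icc 1 j ⊆ (Finset.Icc 1 m).filter (fun l => q (f l)) := by
      intro l hl
      rw [Finset.mem_Icc] at hl
      rw [Finset.mem_filter, Finset.mem_Icc]
      refine ⟨⟨hl.1, hl.2.trans hjm⟩, ?_⟩
      exact hq _ _ (hf (Set.mem_Icc.mpr ⟨hl.1, hl.2.trans hjm⟩)
        (Set.mem_Icc.mpr ⟨hj1, hjm⟩) hl.2) h
    calc j = (Finset.Icc 1 j).card := by simp
      _ ≤ _ := Finset.card_le_card hsub
  · intro hcard
    by_contra hnq
    have hsub : (Finset.Icc 1 m).filter (fun l => q (f l)) ⊆ Finset.Icc 1 (j - 1) := by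
      intro l hl
      rw [Finset.mem_filter, Finset.mem_Icc] at hl
      rw [Finset.mem_Icc]
      refine ⟨hl.1.1, ?_⟩
      by_contra hlj
      have hjl : j ≤ l := by omega
      exact hnq (hq _ _ (hf (Set.mem_Icc.mpr ⟨hj1, hjm⟩)
        (Set.mem_Icc.mpr ⟨hl.1.1, hl.1.2⟩) hjl) hl.2)
    have := Finset.card_le_card hsub
    rw [Nat.card_Icc] at this
    omega

/-- Threshold-payment property of the proportional-share mechanism: if a winner i
(with true cost c i) instead reports any cost ĉ ≤ p = min(B/k*, c_{k*+1}) and the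
bids are re-sorted into c'' (same multiset with c i replaced by ĉ), then she is
still within the winning prefix of size k* and the payment, hence her utility
p - c i, is unchanged. -/
theorem stmt_7 (m : ℕ) (B : ℝ) (hB : 0 ≤ B) (c : ℕ → ℝ)
    (hmono : MonotoneOn c (Set.Icc 1 m))
    (hnn : ∀ j ∈ Set.Icc 1 m, 0 ≤ c j)
    (kstar : ℕ) (hk1 : 1 ≤ kstar) (hkm : kstar < m)
    (hwin : ∀ k ∈ Set.Icc 1 kstar, c k ≤ B / k)
    (hmax : ¬ c (kstar + 1) ≤ B / (kstar + 1))
    (i : ℕ) (hi : i ∈ Set.Icc 1 kstar)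
    (p : ℝ) (hp : p = min (B / kstar) (c (kstar + 1)))
    (chat : ℝ) (hchat0 : 0 ≤ chat) (hchat : chat ≤ p)
    (c'' : ℕ → ℝ) (hmono'' : MonotoneOn c'' (Set.Icc 1 m))
    (hperm : Multiset.map c'' (Finset.Icc 1 m).val =
      chat ::ₘ (Multiset.map c (Finset.Icc 1 m).val).erase (c i)) :
    chat ≤ c'' kstar ∧
      (∀ k ∈ Set.Icc 1 kstar, c'' k ≤ B / k) ∧
      ¬ c'' (kstar + 1) ≤ B / (kstar + 1) ∧
      min (B / kstar) (c'' (kstar + 1)) = p ∧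
      min (B / kstar) (c'' (kstar + 1)) - c i = p - c i := by
  classical
  obtain ⟨hi1, hik⟩ := Set.mem_Icc.mp hi
  have hksm : kstar ≤ m := hkm.le
  have hk1m : kstar + 1 ≤ m := hkm
  have him : i ≤ m := hik.trans hksm
  have hcik : c i ≤ c kstar :=
    hmono (Set.mem_Icc.mpr ⟨hi1, him⟩) (Set.mem_Icc.mpr ⟨hk1, hksm⟩) hik
  have hcik1 : c i ≤ c (kstar + 1) :=
    hmono (Set.mem_Icc.mpr ⟨hi1, him⟩) (Set.mem_Icc.mpr ⟨by omega, hk1m⟩) (by omega)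
  have hpc : p ≤ c (kstar + 1) := hp ▸ min_le_right _ _
  have hpB : p ≤ B / kstar := hp ▸ min_le_left _ _
  have hckB : c kstar ≤ B / kstar := hwin kstar (Set.mem_Icc.mpr ⟨hk1, le_refl _⟩)
  have hmemi : c i ∈ Multiset.map c (Finset.Icc 1 m).val := by
    refine Multiset.mem_map.mpr ⟨i, ?_, rfl⟩
    rw [Finset.mem_val, Finset.mem_Icc]
    exact ⟨hi1, him⟩
  have base : ∀ (q : ℝ → Prop) [DecidablePred q],
      Multiset.countP q (Multiset.map c'' (Finset.Icc 1 m).val)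
        + (if q (c i) then 1 else 0)
      = Multiset.countP q (Multiset.map c (Finset.Icc 1 m).val)
        + (if q chat then 1 else 0) := by
    intro q _
    rw [hperm, Multiset.countP_cons]
    conv_rhs => rw [← Multiset.cons_erase hmemi, Multiset.countP_cons]
    ring
  -- (a) chat ≤ c'' kstar
  have ha : chat ≤ c'' kstar := by
    by_contra hlt
    push_neg at hlt
    set t := c'' kstar with ht
    have hq : ∀ x y : ℝ, x ≤ y → (fun z => z ≤ t) y → (fun z => z ≤ t) x :=
      fun x y hxy hy => hxy.trans hy
    have h1 : kstar ≤ Multiset.countP (fun z => z ≤ t)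
        (Multiset.map c'' (Finset.Icc 1 m).val) :=
      (keyLem m c'' hmono'' (fun z => z ≤ t) hq kstar hk1 hksm).mp le_rfl
    have hb := base (fun z => z ≤ t)
    rw [if_neg (not_le.mpr hlt)] at hb
    by_cases hci : c i ≤ t
    · rw [if_pos hci] at hb
      have h2 : kstar + 1 ≤ Multiset.countP (fun z => z ≤ t)
          (Multiset.map c (Finset.Icc 1 m).val) := by omega
      have h3 : c (kstar + 1) ≤ t :=
        (keyLem m c hmono (fun z => z ≤ t) hq (kstar + 1) (by omega) hk1m).mpr h2
      linarith
    · rw [if_neg hci] at hb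
      have h2 : kstar ≤ Multiset.countP (fun z => z ≤ t)
          (Multiset.map c (Finset.Icc 1 m).val) := by omega
      have h3 : c kstar ≤ t :=
        (keyLem m c hmono (fun z => z ≤ t) hq kstar hk1 hksm).mpr h2
      exact hci (hcik.trans h3)
  -- (b) winning inequalities for c''
  have hb2 : ∀ k ∈ Set.Icc 1 kstar, c'' k ≤ B / k := by
    intro k hk
    obtain ⟨hk1', hkk⟩ := Set.mem_Icc.mp hk
    have hBB : B / (kstar : ℝ) ≤ B / k := by
      rw [div_le_div_iff₀ (by exact_mod_cast (by omega : 0 < kstar))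
        (by exact_mod_cast (by omega : 0 < k))]
      exact mul_le_mul_of_nonneg_left (by exact_mod_cast hkk) hB
    have hchatB : chat ≤ B / k := (hchat.trans hpB).trans hBB
    have hciB : c i ≤ B / k := (hcik.trans hckB).trans hBB
    have hckB' : c k ≤ B / k := hwin k (Set.mem_Icc.mpr ⟨hk1', hkk⟩)
    have hq : ∀ x y : ℝ, x ≤ y → (fun z => z ≤ B / (k : ℝ)) y →
        (fun z => z ≤ B / (k : ℝ)) x := fun x y hxy hy => hxy.trans hy
    have hN : k ≤ Multiset.countP (fun z => z ≤ B / (k : ℝ))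
        (Multiset.map c (Finset.Icc 1 m).val) :=
      (keyLem m c hmono (fun z => z ≤ B / (k : ℝ)) hq k hk1' (hkk.trans hksm)).mp hckB'
    have hb := base (fun z => z ≤ B / (k : ℝ))
    rw [if_pos hciB, if_pos hchatB] at hb
    have hN'' : k ≤ Multiset.countP (fun z => z ≤ B / (k : ℝ))
        (Multiset.map c'' (Finset.Icc 1 m).val) := by omega
    exact (keyLem m c'' hmono'' (fun z => z ≤ B / (k : ℝ)) hq k hk1'
      (hkk.trans hksm)).mpr hN''
  -- (c) c'' (kstar+1) = c (kstar+1)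
  have heq : c'' (kstar + 1) = c (kstar + 1) := by
    apply le_antisymm
    · set t := c (kstar + 1) with ht
      have hq : ∀ x y : ℝ, x ≤ y → (fun z => z ≤ t) y → (fun z => z ≤ t) x :=
        fun x y hxy hy => hxy.trans hy
      have hN : kstar + 1 ≤ Multiset.countP (fun z => z ≤ t)
          (Multiset.map c (Finset.Icc 1 m).val) :=
        (keyLem m c hmono (fun z => z ≤ t) hq (kstar + 1) (by omega) hk1m).mp le_rfl
      have hb := base (fun z => z ≤ t)
      rw [if_pos hcik1, if_pos (hchat.trans hpc)] at hb
      exact (keyLem m c'' hmono'' (fun z => z ≤ t) hq (kstar + 1) (by omega) hk1m).mpr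
        (by omega)
    · by_contra hlt
      push_neg at hlt
      set t := c (kstar + 1) with ht
      have hq : ∀ x y : ℝ, x ≤ y → (fun z => z < t) y → (fun z => z < t) x :=
        fun x y hxy hy => lt_of_le_of_lt hxy hy
      have h1 : kstar + 1 ≤ Multiset.countP (fun z => z < t)
          (Multiset.map c'' (Finset.Icc 1 m).val) :=
        (keyLem m c'' hmono'' (fun z => z < t) hq (kstar + 1) (by omega) hk1m).mp hlt
      have hb := base (fun z => z < t)
      by_cases hci : c i < t
      · rw [if_pos hci] at hb
        have h2 : kstar + 1 ≤ Multiset.countP (fun z => z < t)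
            (Multiset.map c (Finset.Icc 1 m).val) := by
          split_ifs at hb <;> omega
        have h3 : c (kstar + 1) < t :=
          (keyLem m c hmono (fun z => z < t) hq (kstar + 1) (by omega) hk1m).mpr h2
        exact lt_irrefl _ h3
      · rw [if_neg hci] at hb
        have h2 : kstar ≤ Multiset.countP (fun z => z < t)
            (Multiset.map c (Finset.Icc 1 m).val) := by
          split_ifs at hb <;> omega
        have h3 : c kstar < t :=
          (keyLem m c hmono (fun z => z < t) hq kstar hk1 hksm).mpr h2
        exact hci (lt_of_le_of_lt hcik h3)
  refine ⟨ha, hb2, ?_, ?_, ?_⟩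
  · rw [heq]; exact hmax
  · rw [heq, hp]
  · rw [heq, hp]
end

section
/- The greedy interval partitioning algorithm that processes intervals in increasing order of start time uses exactly d slots, where d is the depth of the interval set (the maximum number of intervals containing any common point); in particular the number of slots used is at most the depth, which is optimal. -/
/-- Optimality of greedy interval partitioning: processing intervals in
increasing order of start time and always using the least-indexed compatible
slot (opening a new one only when every existing slot conflicts), the number of
slots used equals the depth d of the interval set, i.e. the maximum number of
intervals containing a common point. -/
theorem stmt_11 (n : ℕ) (hn : 0 < n) (s f : Fin n → ℝ) (hsf : ∀ i, s i ≤ f i)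
    (hsort : Monotone s) (slot : Fin n → ℕ)
    (hcompat : ∀ i j : Fin n, j < i → slot j = slot i → f j < s i)
    (hleast : ∀ i : Fin n, ∀ ℓ < slot i, ∃ j : Fin n, j < i ∧ slot j = ℓ ∧ ¬ f j < s i)
    (d : ℕ)
    (hd : IsGreatest {k : ℕ | ∃ t : ℝ,
      k = (Finset.univ.filter (fun i : Fin n => s i ≤ t ∧ t ≤ f i)).card} d) :
    (Finset.univ.image slot).card = d := by
  -- slot is injective on any set of intervals containing a common point
  have hinj : ∀ t : ℝ, Set.InjOn slot
      (Finset.univ.filter (fun i : Fin n => s i ≤ t ∧ t ≤ f i)) := by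
    intro t a ha b hb hab
    simp only [Finset.coe_filter, Set.mem_setOf_eq] at ha hb
    by_contra hne
    rcases lt_or_gt_of_ne hne with h | h
    · exact absurd (hcompat b a h hab) (not_lt.2 (le_trans hb.2.1 ha.2.2))
    · exact absurd (hcompat a b h hab.symm) (not_lt.2 (le_trans ha.2.1 hb.2.2))
  -- d ≤ number of slots used
  have h1 : d ≤ (Finset.univ.image slot).card := by
    obtain ⟨t, ht⟩ := hd.1
    rw [ht, ← Finset.card_image_of_injOn (hinj t)]
    exact Finset.card_le_card (Finset.image_subset_image (Finset.filter_subset _ _))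
  -- pick an interval with maximal slot
  obtain ⟨i, -, hi⟩ := Finset.exists_max_image (f := slot) Finset.univ
    (Finset.univ_nonempty_iff.2 (Fin.pos_iff_nonempty.1 hn))
  set M := slot i with hM
  -- the set of intervals containing s i
  set T := Finset.univ.filter (fun j : Fin n => s j ≤ s i ∧ s i ≤ f j) with hT
  -- choose, for each ℓ < M, a witness; ℓ = M maps to i itself
  have hwit : ∀ ℓ : ℕ, ℓ ≤ M → ∃ j : Fin n, slot j = ℓ ∧ j ∈ T := by
    intro ℓ hℓ
    rcases eq_or_lt_of_le hℓ with h | h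
    · exact ⟨i, h ▸ rfl, by simp [hT, hsf i]⟩
    · obtain ⟨j, hji, hsl, hfj⟩ := hleast i ℓ h
      exact ⟨j, hsl, by simp [hT, hsort hji.le, not_lt.1 hfj]⟩
  choose g hg1 hg2 using hwit
  -- T has at least M+1 elements
  have h2 : M + 1 ≤ T.card := by
    have : (Finset.range (M + 1)).card ≤ T.card := by
      apply Finset.card_le_card_of_injOn (fun ℓ => if h : ℓ ≤ M then g ℓ h else i)
      · intro ℓ hℓ
        have h : ℓ ≤ M := Nat.lt_succ_iff.1 (Finset.mem_range.1 hℓ)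
        simpa [h] using hg2 ℓ h
      · intro a ha b hb hab
        have ha' : a ≤ M := Nat.lt_succ_iff.1 (Finset.mem_range.1 ha)
        have hb' : b ≤ M := Nat.lt_succ_iff.1 (Finset.mem_range.1 hb)
        simp only [dif_pos ha', dif_pos hb'] at hab
        have := hg1 a ha'
        rw [hab, hg1 b hb'] at this
        exact this.symm
    simpa using this
  -- T.card ≤ d
  have h3 : T.card ≤ d := hd.2 ⟨s i, rfl⟩
  -- number of slots used ≤ M + 1
  have h4 : (Finset.univ.image slot).card ≤ M + 1 := by
    have : Finset.univ.image slot ⊆ Finset.range (M + 1) := by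
      intro k hk
      obtain ⟨j, -, hj⟩ := Finset.mem_image.1 hk
      exact Finset.mem_range.2 (Nat.lt_succ_iff.2 (hj ▸ hi j (Finset.mem_univ j)))
    simpa using Finset.card_le_card this
  omega
end
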